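/- An element x of a continuous dcpo D is strongly maximal if and only if x is sharp and every subbasic Lawson open neighbourhood of x of the form {d ∈ D | there is a Scott open containing y but not d} (for y ∈ D) contains a Scott open neighbourhood of x. -/

import Mathlib

/-!
The subbasic Lawson open `{d | ∃ U Scott open, y ∈ U ∧ d ∉ U}` is just `{d | ¬ y ≤ d}`, since the
Scott closure of a point is its principal lower set. Forwards: if `¬ y ≤ x`, some `a ≪ y` is not
below `x`; strong maximality then separates `y` from `x`, and the open around `x` avoids `↑y`.
Backwards: interpolate `u ≪ w ≪ v`; if `u ≪ x` fails, sharpness gives `¬ w ≤ x`, so some Scott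
open `W ∋ x` avoids `↑w`, and `W` is disjoint from the Scott open `↟w ∋ v`.
-/

open Classical

def IsDcpo (D : Type*) [PartialOrder D] : Prop :=
  ∀ S : Set D, S.Nonempty → DirectedOn (· ≤ ·) S → ∃ s, IsLUB S s

def WayBelow {D : Type*} [PartialOrder D] (x y : D) : Prop :=
  ∀ S : Set D, S.Nonempty → DirectedOn (· ≤ ·) S →
    ∀ s, IsLUB S s → y ≤ s → ∃ a ∈ S, x ≤ a

def ScottOpen {D : Type*} [PartialOrder D] (U : Set D) : Prop :=
  IsUpperSet U ∧ ∀ S : Set D, S.Nonempty → DirectedOn (· ≤ ·) S →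
    ∀ s, IsLUB S s → s ∈ U → ∃ a ∈ S, a ∈ U

def ScottClosed {D : Type*} [PartialOrder D] (C : Set D) : Prop :=
  IsLowerSet C ∧ ∀ S : Set D, S.Nonempty → DirectedOn (· ≤ ·) S →
    S ⊆ C → ∀ s, IsLUB S s → s ∈ C

def IsBasis {D : Type*} [PartialOrder D] (B : Set D) : Prop :=
  ∀ x : D, (B ∩ {y | WayBelow y x}).Nonempty ∧
    DirectedOn (· ≤ ·) (B ∩ {y | WayBelow y x}) ∧
    IsLUB (B ∩ {y | WayBelow y x}) x

def DcpoContinuous (D : Type*) [PartialOrder D] : Prop :=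
  ∀ x : D, ({y | WayBelow y x} : Set D).Nonempty ∧
    DirectedOn (· ≤ ·) ({y | WayBelow y x} : Set D) ∧
    IsLUB ({y | WayBelow y x} : Set D) x

def DcpoAlgebraic (D : Type*) [PartialOrder D] : Prop :=
  ∀ x : D, ({c | WayBelow c c ∧ c ≤ x} : Set D).Nonempty ∧
    DirectedOn (· ≤ ·) ({c | WayBelow c c ∧ c ≤ x} : Set D) ∧
    IsLUB ({c | WayBelow c c ∧ c ≤ x} : Set D) x

def HausdorffSep {D : Type*} [PartialOrder D] (x y : D) : Prop :=
  ∃ U V : Set D, ScottOpen U ∧ ScottOpen V ∧ x ∈ U ∧ y ∈ V ∧ U ∩ V = ∅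

def StronglyMaximal {D : Type*} [PartialOrder D] (x : D) : Prop :=
  ∀ u v : D, WayBelow u v → WayBelow u x ∨ HausdorffSep v x

def Sharp {D : Type*} [PartialOrder D] (x : D) : Prop :=
  ∀ y z : D, WayBelow y z → WayBelow y x ∨ ∃ U : Set D, ScottOpen U ∧ z ∈ U ∧ x ∉ U

noncomputable def step {D E : Type*} [PartialOrder D] [PartialOrder E] [OrderBot E]
    (x : D) (y : E) : D → E :=
  fun d => if x ≤ d then y else ⊥

local infix:50 " ≪ " => WayBelow

section WayBelow

variable {D : Type*} [PartialOrder D] {a b c : D}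

theorem WayBelow.le (h : a ≪ b) : a ≤ b := by
  obtain ⟨d, hd, had⟩ := h {b} (Set.singleton_nonempty b) (directedOn_singleton b) b
    isLUB_singleton le_rfl
  exact (Set.mem_singleton_iff.mp hd) ▸ had

theorem WayBelow.trans_le (h : a ≪ b) (hbc : b ≤ c) : a ≪ c :=
  fun S hS hdir s hlub hcs => h S hS hdir s hlub (hbc.trans hcs)

theorem LE.le.trans_wayBelow (h : a ≤ b) (hbc : b ≪ c) : a ≪ c := fun S hS hdir s hlub hcs => by
  obtain ⟨d, hd, hbd⟩ := hbc S hS hdir s hlub hcs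
  exact ⟨d, hd, h.trans hbd⟩

theorem WayBelow.exists_wayBelow_wayBelow (hc : DcpoContinuous D) (hac : a ≪ c) :
    ∃ b, a ≪ b ∧ b ≪ c := by
  set S : Set D := {a | ∃ b, a ≪ b ∧ b ≪ c}
  obtain ⟨⟨b, hb⟩, hdir_c, hlub_c⟩ := hc c
  have hne : S.Nonempty := by
    obtain ⟨⟨a, ha⟩, -, -⟩ := hc b
    exact ⟨a, b, ha, hb⟩
  have hdir : DirectedOn (· ≤ ·) S := by
    rintro a₁ ⟨b₁, hab₁, hb₁⟩ a₂ ⟨b₂, hab₂, hb₂⟩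
    obtain ⟨b₃, hb₃, hle₁, hle₂⟩ := hdir_c b₁ hb₁ b₂ hb₂
    obtain ⟨a₃, ha₃, hle₁', hle₂'⟩ := (hc b₃).2.1 a₁ (hab₁.trans_le hle₁) a₂ (hab₂.trans_le hle₂)
    exact ⟨a₃, ⟨b₃, ha₃, hb₃⟩, hle₁', hle₂'⟩
  have hlub : IsLUB S c := by
    refine ⟨fun a ⟨b, hab, hbc⟩ => hab.le.trans hbc.le, fun t ht => hlub_c.2 fun b hb => ?_⟩
    exact (hc b).2.2.2 fun a ha => ht ⟨b, ha, hb⟩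
  obtain ⟨a', ⟨b, ha'b, hbc⟩, haa'⟩ := hac S hne hdir c hlub le_rfl
  exact ⟨b, haa'.trans_wayBelow ha'b, hbc⟩

theorem exists_wayBelow_not_le (hc : DcpoContinuous D) (h : ¬ b ≤ c) : ∃ a, a ≪ b ∧ ¬ a ≤ c := by
  by_contra! hall
  exact h ((hc b).2.2.2 hall)

end WayBelow

section ScottOpen

variable {D : Type*} [PartialOrder D]

theorem scottOpen_setOf_wayBelow (hc : DcpoContinuous D) (a : D) : ScottOpen {d | a ≪ d} := by
  refine ⟨fun d d' hdd' had => had.trans_le hdd', fun S hS hdir s hlub has => ?_⟩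
  obtain ⟨b, hab, hbs⟩ := has.exists_wayBelow_wayBelow hc
  obtain ⟨d, hd, hbd⟩ := hbs S hS hdir s hlub le_rfl
  exact ⟨d, hd, hab.trans_le hbd⟩

theorem scottOpen_setOf_not_le (d : D) : ScottOpen {e | ¬ e ≤ d} := by
  refine ⟨fun e e' hee' he he'd => he (hee'.trans he'd), fun S _ _ s hlub hs => ?_⟩
  by_contra! hall
  exact hs (hlub.2 fun a ha => not_not.mp (hall a ha))

theorem exists_scottOpen_mem_not_mem_iff {y d : D} :
    (∃ U : Set D, ScottOpen U ∧ y ∈ U ∧ d ∉ U) ↔ ¬ y ≤ d := by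
  constructor
  · rintro ⟨U, hU, hyU, hdU⟩ hyd
    exact hdU (hU.1 hyd hyU)
  · exact fun h => ⟨_, scottOpen_setOf_not_le d, h, fun hd => hd le_rfl⟩

theorem HausdorffSep.not_le {v x : D} (h : HausdorffSep v x) : ¬ v ≤ x := by
  obtain ⟨U, V, hU, -, hvU, hxV, hUV⟩ := h
  exact fun hvx => hUV.subset ⟨hU.1 hvx hvU, hxV⟩

end ScottOpen

theorem stmt19_general {D : Type*} [PartialOrder D]
    (hc : DcpoContinuous D) (x : D) :
    StronglyMaximal x ↔
      Sharp x ∧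
      ∀ y : D, x ∈ {d : D | ∃ U : Set D, ScottOpen U ∧ y ∈ U ∧ d ∉ U} →
        ∃ W : Set D, ScottOpen W ∧ x ∈ W ∧
          W ⊆ {d : D | ∃ U : Set D, ScottOpen U ∧ y ∈ U ∧ d ∉ U} := by
  simp only [Sharp, Set.mem_ofPred_eq, exists_scottOpen_mem_not_mem_iff]
  constructor
  · intro hsm
    refine ⟨fun y z hyz => (hsm y z hyz).imp_right HausdorffSep.not_le, fun y hyx => ?_⟩
    obtain ⟨a, hay, hax⟩ := exists_wayBelow_not_le hc hyx
    obtain hx | ⟨U, W, hU, hW, hyU, hxW, hUW⟩ := hsm a y hay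
    · exact absurd hx.le hax
    exact ⟨W, hW, hxW, fun d hdW hyd => hUW.subset ⟨hU.1 hyd hyU, hdW⟩⟩
  · rintro ⟨hsharp, hsep⟩ u v huv
    obtain ⟨w, huw, hwv⟩ := huv.exists_wayBelow_wayBelow hc
    refine (hsharp u w huw).imp_right fun hwx => ?_
    obtain ⟨W, hW, hxW, hWw⟩ := hsep w hwx
    refine ⟨{d | w ≪ d}, W, scottOpen_setOf_wayBelow hc w, hW, hwv, hxW, ?_⟩
    exact Set.eq_empty_of_forall_notMem fun d ⟨hwd, hdW⟩ => hWw hdW hwd.le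

theorem stmt19 {D : Type*} [PartialOrder D] (hD : IsDcpo D)
    (hc : DcpoContinuous D) (x : D) :
    StronglyMaximal x ↔
      Sharp x ∧
      ∀ y : D, x ∈ {d : D | ∃ U : Set D, ScottOpen U ∧ y ∈ U ∧ d ∉ U} →
        ∃ W : Set D, ScottOpen W ∧ x ∈ W ∧
          W ⊆ {d : D | ∃ U : Set D, ScottOpen U ∧ y ∈ U ∧ d ∉ U} :=
  stmt19_general hc x
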